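/- Let D be a self-adjoint operator on H and ψ_s(λ) = sλ/(1+s²λ²). For any f holomorphic and bounded on an open neighbourhood of ℝ of the form O = {x+iy : y² < tan²(ω)x² + σ²} with 0 < ω < π/2, σ > 0, the operator (ψ_s f ψ_t)(D) defined by the functional calculus satisfies ‖(ψ_s f ψ_t)(D)‖ ≤ C ‖f‖_∞ · min{s/t, t/s}·(1 + |log(s/t)|) for all s,t > 0, with C depending only on ω, σ. -/

import Mathlib

/-!
Since `D` is bounded and self-adjoint, `‖g(D)‖` is the supremum of `|g|` over the real spectrum
of `D`, so only `f` on `ℝ ⊆ O` matters. On `ℝ`, with `a = s|λ|` and `b = t|λ|`,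
`a/(1+a²) · b/(1+b²) ≤ a · b/(1+b²) ≤ a/b = s/t`, and symmetrically `≤ t/s`; hence `C = 1`
works, even without the logarithmic factor.
-/

open scoped Real

lemma norm_ofReal_mul_div_one_add_sq (u x : ℝ) :
    ‖(u : ℂ) * x / (1 + (u : ℂ) ^ 2 * x ^ 2)‖ = |u * x| / (1 + (u * x) ^ 2) := by
  have h : (u : ℂ) * x / (1 + (u : ℂ) ^ 2 * x ^ 2) = ((u * x / (1 + (u * x) ^ 2) : ℝ) : ℂ) := by
    push_cast; ring
  have hden : (0 : ℝ) < 1 + (u * x) ^ 2 := by positivity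
  rw [h, Complex.norm_real, Real.norm_eq_abs, abs_div, abs_of_pos hden]

lemma abs_mul_div_one_add_sq_mul_le_div (s t x : ℝ) (hs : 0 ≤ s) (ht : 0 < t) :
    |s * x| / (1 + (s * x) ^ 2) * (|t * x| / (1 + (t * x) ^ 2)) ≤ s / t := by
  rw [abs_mul, abs_mul, abs_of_nonneg hs, abs_of_pos ht, div_mul_div_comm,
    div_le_div_iff₀ (by positivity) ht]
  have hx : |x| * |x| = x ^ 2 := by rw [← abs_mul, abs_mul_self, sq]
  calc s * |x| * (t * |x|) * t = s * (t ^ 2 * x ^ 2) * 1 := by rw [← hx]; ring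
    _ ≤ s * (1 + (t * x) ^ 2) * (1 + (s * x) ^ 2) := by gcongr <;> nlinarith [sq_nonneg (s * x)]
    _ = s * ((1 + (s * x) ^ 2) * (1 + (t * x) ^ 2)) := by ring

lemma abs_mul_div_one_add_sq_mul_le_min (s t x : ℝ) (hs : 0 < s) (ht : 0 < t) :
    |s * x| / (1 + (s * x) ^ 2) * (|t * x| / (1 + (t * x) ^ 2)) ≤ min (s / t) (t / s) :=
  le_min (abs_mul_div_one_add_sq_mul_le_div s t x hs.le ht)
    ((mul_comm _ _).trans_le (abs_mul_div_one_add_sq_mul_le_div t s x ht.le hs))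

lemma IsSelfAdjoint.norm_cfc_le_of_forall_ofReal {A : Type*} [CStarAlgebra A] {a : A}
    (ha : IsSelfAdjoint a) {g : ℂ → ℂ} {c : ℝ} (h : ∀ x : ℝ, ‖g x‖ ≤ c) :
    ‖cfc g a‖ ≤ c :=
  norm_cfc_le ((norm_nonneg _).trans (h 0)) fun z hz ↦ ha.mem_spectrum_eq_re hz ▸ h z.re

theorem psi_f_psi_norm_bound_general (ω σ : ℝ) (hσ : 0 < σ) :
    ∃ C > (0 : ℝ),
      ∀ (H : Type) [NormedAddCommGroup H] [InnerProductSpace ℂ H] [CompleteSpace H]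
        (D : H →L[ℂ] H), IsSelfAdjoint D →
      ∀ (f : ℂ → ℂ) (M : ℝ),
        DifferentiableOn ℂ f {z : ℂ | z.im ^ 2 < Real.tan ω ^ 2 * z.re ^ 2 + σ ^ 2} →
        (∀ z ∈ {z : ℂ | z.im ^ 2 < Real.tan ω ^ 2 * z.re ^ 2 + σ ^ 2}, ‖f z‖ ≤ M) →
        ∀ s t : ℝ, 0 < s → 0 < t →
          ‖cfc (fun z : ℂ =>
              ((s : ℂ) * z / (1 + (s : ℂ) ^ 2 * z ^ 2)) * f z *
                ((t : ℂ) * z / (1 + (t : ℂ) ^ 2 * z ^ 2))) D‖ ≤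
            C * M * (min (s / t) (t / s) * (1 + |Real.log (s / t)|)) := by
  refine ⟨1, one_pos, fun H _ _ _ D hD f M _ hfM s t hs ht ↦ hD.norm_cfc_le_of_forall_ofReal ?_⟩
  intro x
  have hx : (x : ℂ) ∈ {z : ℂ | z.im ^ 2 < Real.tan ω ^ 2 * z.re ^ 2 + σ ^ 2} := by
    rw [Set.mem_ofPred_eq, Complex.ofReal_im, Complex.ofReal_re, sq 0, zero_mul]
    positivity
  have hfx : ‖f x‖ ≤ M := hfM x hx
  have hM : 0 ≤ M := (norm_nonneg _).trans hfx
  have hψψ := abs_mul_div_one_add_sq_mul_le_min s t x hs ht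
  rw [norm_mul, norm_mul, norm_ofReal_mul_div_one_add_sq, norm_ofReal_mul_div_one_add_sq]
  calc |s * x| / (1 + (s * x) ^ 2) * ‖f x‖ * (|t * x| / (1 + (t * x) ^ 2))
      ≤ M * min (s / t) (t / s) := by
        rw [mul_right_comm, mul_comm M]; gcongr
    _ ≤ 1 * M * (min (s / t) (t / s) * (1 + |Real.log (s / t)|)) := by
        rw [one_mul, ← mul_assoc]
        exact le_mul_of_one_le_right (by positivity) (le_add_of_nonneg_right (abs_nonneg _))

/-- For self-adjoint `D` and `f` bounded holomorphic on the
neighbourhood `O_{ω,σ} = {x+iy : y² < tan²(ω)x² + σ²}` of `ℝ`, with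
`ψ_s(λ) = sλ/(1+s²λ²)`, the operator `(ψ_s f ψ_t)(D)` satisfies
`‖(ψ_s f ψ_t)(D)‖ ≤ C‖f‖_∞ min{s/t, t/s}(1 + |log(s/t)|)`,
with `C` depending only on `ω, σ`. -/
theorem psi_f_psi_norm_bound (ω σ : ℝ) (hω : ω ∈ Set.Ioo 0 (π / 2)) (hσ : 0 < σ) :
    ∃ C > (0 : ℝ),
      ∀ (H : Type) [NormedAddCommGroup H] [InnerProductSpace ℂ H] [CompleteSpace H]
        (D : H →L[ℂ] H), IsSelfAdjoint D →
      ∀ (f : ℂ → ℂ) (M : ℝ),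
        DifferentiableOn ℂ f {z : ℂ | z.im ^ 2 < Real.tan ω ^ 2 * z.re ^ 2 + σ ^ 2} →
        (∀ z ∈ {z : ℂ | z.im ^ 2 < Real.tan ω ^ 2 * z.re ^ 2 + σ ^ 2}, ‖f z‖ ≤ M) →
        ∀ s t : ℝ, 0 < s → 0 < t →
          ‖cfc (fun z : ℂ =>
              ((s : ℂ) * z / (1 + (s : ℂ) ^ 2 * z ^ 2)) * f z *
                ((t : ℂ) * z / (1 + (t : ℂ) ^ 2 * z ^ 2))) D‖ ≤
            C * M * (min (s / t) (t / s) * (1 + |Real.log (s / t)|)) :=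
  psi_f_psi_norm_bound_general ω σ hσ
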